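/- Suppose x_N = M. Then the function G_{M,N}, regarded as a function of v_M, satisfies the quasi-periodicities G_{M,N}(u₁,…,u_N|v₁,…,v_{M−1}, v_M + 2K₁/λ|x₁,…,x_N|a₁₂) = (-1)^N G_{M,N}(u₁,…,u_N|v₁,…,v_M|x₁,…,x_N|a₁₂) and G_{M,N}(u₁,…,u_N|v₁,…,v_{M−1}, v_M + 2iK₂/λ|x₁,…,x_N|a₁₂) = (-q^{-1})^N exp( -(iπλ/K₁)( N v_M − Σ_{j=1}^N u_j + a₁₂ + N + M − 2 ) ) G_{M,N}(u₁,…,u_N|v₁,…,v_M|x₁,…,x_N|a₁₂). -/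

import Mathlib

/-!
Only two kinds of factors of a `σ`-summand of `E_{M,N}` involve `v_M`: `[u_{σ(j)} - v_M]` for the
rows with `x_j < M`, and `[-u_{σ(N)} + v_M + a₁₂ + M + N - 2]` for the last row, where `x_N = M`.
In the variable `S = e^{iπw/2K₁}` the theta function reads
`H = q^{1/4} i (S⁻¹ - S) ∏ (1 - q^{2n} S²)(1 - q^{2n} S⁻²)(1 - q^{2n})`, and the two shifts are
`S ↦ -S` and `S ↦ qS`. The functional equation `(1 - py) Θ(py) = (1 - y⁻¹) Θ(y)` of the
q-Pochhammer product gives `H(w + 2K₁) = -H(w)` and `H(w + 2iK₂) = -q⁻¹ e^{-iπw/K₁} H(w)`.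
If `[w + s] = c e^{dw} [w]`, the oddness of `H` makes every row contribute the same multiplier
`c e^{d(v_M - u_{σ(j)})}` and the last row an extra `e^{d(a₁₂ + M + N - 2)}`, so the total factor
does not depend on `σ`.
-/

open Complex

noncomputable section

/-- The half period magnitude `K₁` for elliptic nome `q`. -/
def Kone (q : ℝ) : ℝ :=
  Real.pi / 2 * ∏' n : ℕ,
    ((1 + q ^ (2 * n + 1)) / (1 - q ^ (2 * n + 1)) *
      ((1 - q ^ (2 * n + 2)) / (1 + q ^ (2 * n + 2)))) ^ 2

/-- The half period magnitude `K₂` for elliptic nome `q`. -/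
def Ktwo (q : ℝ) : ℝ := -(Kone q / Real.pi) * Real.log q

/-- The elliptic theta function `H`. -/
def theta (q : ℝ) (u : ℂ) : ℂ :=
  2 * (q : ℂ) ^ (1 / 4 : ℂ) * Complex.sin (Real.pi * u / (2 * (Kone q : ℂ))) *
    ∏' n : ℕ,
      ((1 - 2 * (q : ℂ) ^ (2 * n + 2) * Complex.cos (Real.pi * u / (Kone q : ℂ)) +
          (q : ℂ) ^ (4 * n + 4)) * (1 - (q : ℂ) ^ (2 * n + 2)))

/-- The bracket `[u] = H(λu)`. -/
def brak (q : ℝ) (lam : ℂ) (u : ℂ) : ℂ := theta q (lam * u)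

/-- `x^M_k`: equals `x_k` for `k = 1,…,N` and `M+1` for `k = N+1`. -/
def xM (M N : ℕ) (x : ℕ → ℕ) (k : ℕ) : ℕ := if k = N + 1 then M + 1 else x k

/-- The elliptic Schur-type symmetric function `E_{M,N}`. -/
def ellE (q : ℝ) (lam : ℂ) (M N : ℕ) (u v : ℕ → ℂ) (x : ℕ → ℕ) (a12 : ℂ) : ℂ :=
  (∏ k ∈ Finset.Icc 1 N, ∏ j ∈ Finset.Icc (xM M N x k) (xM M N x (k + 1) - 2),
      brak q lam (a12 + (j : ℂ) + (N : ℂ)) / brak q lam (a12 + (j : ℂ) + (N : ℂ) - (k : ℂ))) *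
  ∑ σ : Equiv.Perm (Fin N),
    (∏ j : Fin N, ∏ k : Fin N,
        if (j : ℕ) < (k : ℕ) then
          brak q lam 1 / brak q lam (u ((σ j : ℕ) + 1) - u ((σ k : ℕ) + 1))
        else 1) *
    (∏ j : Fin N, ∏ k ∈ Finset.Icc (x ((j : ℕ) + 1) + 1) M,
        brak q lam (u ((σ j : ℕ) + 1) - v k) / brak q lam 1) *
    (∏ j : Fin N,
        brak q lam (-u ((σ j : ℕ) + 1) + v (x ((j : ℕ) + 1)) + a12 +
            (x ((j : ℕ) + 1) : ℂ) + (N : ℂ) - 2) /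
          brak q lam (a12 + (x ((j : ℕ) + 1) : ℂ) + (N : ℂ) - 2)) *
    (∏ j : Fin N, ∏ k ∈ Finset.Icc 1 (x ((j : ℕ) + 1) - 1),
        brak q lam (1 + u ((σ j : ℕ) + 1) - v k) / brak q lam 1)

/-- `G_{M,N}`: the product of the elliptic factors and `E_{M,N}`. -/
def ellG (q : ℝ) (lam : ℂ) (M N : ℕ) (u v : ℕ → ℂ) (x : ℕ → ℕ) (a12 : ℂ) : ℂ :=
  (∏ j : Fin N, ∏ k : Fin N,
      if (j : ℕ) < (k : ℕ) then
        brak q lam (1 + u ((k : ℕ) + 1) - u ((j : ℕ) + 1)) / brak q lam 1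
      else 1) *
  ellE q lam M N u v x a12

open Finset
open scoped Real

def qPochhammer (p a : ℂ) : ℂ := ∏' n : ℕ, (1 - a * p ^ n)

lemma multipliable_one_sub_mul_pow {p : ℂ} (hp : ‖p‖ < 1) (a : ℂ) :
    Multipliable fun n : ℕ => 1 - a * p ^ n := by
  simp_rw [sub_eq_add_neg]
  refine multipliable_one_add_of_summable ?_
  simpa [norm_mul, norm_pow] using (summable_geometric_of_lt_one (norm_nonneg _) hp).mul_left ‖a‖

lemma qPochhammer_eq_one_sub_mul {p : ℂ} (hp : ‖p‖ < 1) (a : ℂ) :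
    qPochhammer p a = (1 - a) * qPochhammer p (a * p) := by
  have hshift : (fun n : ℕ => 1 - a * p ^ (n + 1)) = fun n => 1 - a * p * p ^ n := by
    funext n; ring
  rw [qPochhammer, tprod_eq_zero_mul' (by rw [hshift]; exact multipliable_one_sub_mul_pow hp _),
    hshift, qPochhammer, pow_zero, mul_one]

def thetaProd (p y : ℂ) : ℂ :=
  ∏' n : ℕ, (1 - p ^ (n + 1) * y) * (1 - p ^ (n + 1) / y) * (1 - p ^ (n + 1))

lemma thetaProd_eq_qPochhammer {p : ℂ} (hp : ‖p‖ < 1) (y : ℂ) :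
    thetaProd p y = qPochhammer p (p * y) * qPochhammer p (p / y) * qPochhammer p p := by
  simp only [qPochhammer]
  rw [← Multipliable.tprod_mul (multipliable_one_sub_mul_pow hp _)
      (multipliable_one_sub_mul_pow hp _),
    ← Multipliable.tprod_mul ((multipliable_one_sub_mul_pow hp _).mul
      (multipliable_one_sub_mul_pow hp _)) (multipliable_one_sub_mul_pow hp _)]
  refine tprod_congr fun n => ?_
  ring

lemma one_sub_mul_mul_thetaProd_mul {p : ℂ} (hp : ‖p‖ < 1) (hp0 : p ≠ 0) (y : ℂ) :
    (1 - p * y) * thetaProd p (p * y) = (1 - y⁻¹) * thetaProd p y := by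
  have hdiv : p / (p * y) = y⁻¹ := by rw [div_mul_eq_div_div, div_self hp0, one_div]
  rw [thetaProd_eq_qPochhammer hp, thetaProd_eq_qPochhammer hp, hdiv,
    qPochhammer_eq_one_sub_mul hp y⁻¹, qPochhammer_eq_one_sub_mul hp (p * y),
    show p * (p * y) = p * y * p by ring, show y⁻¹ * p = p / y by ring]
  ring

def thetaOfExp (q : ℝ) (S : ℂ) : ℂ :=
  (q : ℂ) ^ (1 / 4 : ℂ) * I * (S⁻¹ - S) * thetaProd ((q : ℂ) ^ 2) (S ^ 2)

lemma theta_eq_thetaOfExp (q : ℝ) (w : ℂ) :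
    theta q w = thetaOfExp q (exp (π * w / (2 * Kone q) * I)) := by
  set S := exp (π * w / (2 * Kone q) * I) with hS
  have hS0 : S ≠ 0 := exp_ne_zero _
  have hsin : sin (π * w / (2 * Kone q)) = (S⁻¹ - S) * I / 2 := by
    rw [sin, hS, neg_mul, exp_neg]
  have hsq : exp (π * w / Kone q * I) = S ^ 2 := by
    rw [hS, ← exp_nat_mul]
    ring_nf
  rw [theta, thetaOfExp, thetaProd, hsin]
  congr 1
  · ring
  refine tprod_congr fun n => ?_
  rw [cos, neg_mul, exp_neg, hsq]
  field_simp
  ring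

lemma thetaOfExp_neg (q : ℝ) (S : ℂ) : thetaOfExp q (-S) = -thetaOfExp q S := by
  rw [thetaOfExp, thetaOfExp, inv_neg, neg_sq]
  ring

lemma thetaOfExp_mul {q : ℝ} (hq0 : 0 < q) (hq1 : q < 1) {S : ℂ} (hS : S ≠ 0) :
    thetaOfExp q (S * q) = -(q : ℂ)⁻¹ * (S ^ 2)⁻¹ * thetaOfExp q S := by
  have hq : (q : ℂ) ≠ 0 := by exact_mod_cast hq0.ne'
  have hp : ‖(q : ℂ) ^ 2‖ < 1 := by
    rw [norm_pow, Complex.norm_of_nonneg hq0.le]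
    nlinarith
  have hfe := one_sub_mul_mul_thetaProd_mul hp (pow_ne_zero 2 hq) (S ^ 2)
  rw [thetaOfExp, thetaOfExp, mul_pow, mul_comm (S ^ 2)]
  set T := thetaProd ((q : ℂ) ^ 2) (S ^ 2)
  set T' := thetaProd ((q : ℂ) ^ 2) ((q : ℂ) ^ 2 * S ^ 2)
  field_simp
  field_simp at hfe
  linear_combination (q : ℂ) ^ (1 / 4 : ℂ) * hfe

lemma theta_neg (q : ℝ) (w : ℂ) : theta q (-w) = -theta q w := by
  simp only [theta, mul_neg, neg_div, sin_neg, cos_neg]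
  ring

lemma theta_add_two_mul_Kone {q : ℝ} (hK : (Kone q : ℂ) ≠ 0) (w : ℂ) :
    theta q (w + 2 * Kone q) = -theta q w := by
  rw [theta_eq_thetaOfExp, theta_eq_thetaOfExp,
    show π * (w + 2 * Kone q) / (2 * Kone q) * I = π * w / (2 * Kone q) * I + π * I by
      field_simp,
    exp_add_pi_mul_I, thetaOfExp_neg]

lemma pi_mul_Ktwo (q : ℝ) : π * Ktwo q = -(Kone q * Real.log q) := by
  rw [Ktwo]
  field_simp

lemma theta_add_two_I_mul_Ktwo {q : ℝ} (hq0 : 0 < q) (hq1 : q < 1) (hK : (Kone q : ℂ) ≠ 0)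
    (w : ℂ) :
    theta q (w + 2 * I * Ktwo q) =
      -(q : ℂ)⁻¹ * exp (-(I * π * w / Kone q)) * theta q w := by
  have hpiK : (π : ℂ) * Ktwo q = -(Kone q * Real.log q) := by exact_mod_cast pi_mul_Ktwo q
  have harg : π * (w + 2 * I * Ktwo q) / (2 * Kone q) * I =
      π * w / (2 * Kone q) * I + Real.log q := by
    field_simp
    linear_combination 2 * I ^ 2 * hpiK - 2 * (Kone q : ℂ) * Real.log q * I_mul_I
  have hsq : exp (-(I * π * w / Kone q)) = (exp (π * w / (2 * Kone q) * I) ^ 2)⁻¹ := by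
    rw [← exp_nat_mul, ← exp_neg]
    ring_nf
  rw [theta_eq_thetaOfExp, theta_eq_thetaOfExp, harg, exp_add, ← ofReal_exp, Real.exp_log hq0,
    thetaOfExp_mul hq0 hq1 (exp_ne_zero _), hsq]

lemma Kone_ne_zero_of_brak_one_ne_zero {q : ℝ} {lam : ℂ} (h : brak q lam 1 ≠ 0) :
    (Kone q : ℂ) ≠ 0 := by
  contrapose! h
  simp [brak, theta, h]

lemma brak_neg (q : ℝ) (lam w : ℂ) : brak q lam (-w) = -brak q lam w := by
  rw [brak, brak, mul_neg, theta_neg]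

lemma brak_add_two_mul_Kone_div {q : ℝ} {lam : ℂ} (hK : (Kone q : ℂ) ≠ 0) (hlam : lam ≠ 0)
    (w : ℂ) : brak q lam (w + 2 * Kone q / lam) = -brak q lam w := by
  rw [brak, brak, mul_add, mul_div_cancel₀ _ hlam, theta_add_two_mul_Kone hK]

lemma brak_add_two_I_mul_Ktwo_div {q : ℝ} {lam : ℂ} (hq0 : 0 < q) (hq1 : q < 1)
    (hK : (Kone q : ℂ) ≠ 0) (hlam : lam ≠ 0) (w : ℂ) :
    brak q lam (w + 2 * I * Ktwo q / lam) =
      -(q : ℂ)⁻¹ * exp (-(I * π * lam / Kone q) * w) * brak q lam w := by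
  rw [brak, brak, mul_add, mul_div_cancel₀ _ hlam, theta_add_two_I_mul_Ktwo hq0 hq1 hK]
  ring_nf

lemma brak_sub_of_brak_add {q : ℝ} {lam s c d : ℂ}
    (hshift : ∀ w, brak q lam (w + s) = c * exp (d * w) * brak q lam w) (w : ℂ) :
    brak q lam (w - s) = c * exp (-(d * w)) * brak q lam w := by
  have h := brak_neg q lam (-w + s)
  rw [show -(-w + s) = w - s by ring, hshift, brak_neg] at h
  rw [h, mul_neg]
  ring_nf

lemma apply_lt_of_lt_of_apply_eq {x : ℕ → ℕ} {M N : ℕ}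
    (hxmono : ∀ j k, 1 ≤ j → j < k → k ≤ N → x j < x k) (hxN : x N = M) {j : ℕ}
    (hj : 1 ≤ j) (hjN : j < N) : x j < M :=
  hxN ▸ hxmono j N hj hjN le_rfl

lemma Fin.sum_univ_add_one_eq_sum_Icc {A : Type*} [AddCommMonoid A] (f : ℕ → A) (N : ℕ) :
    ∑ j : Fin N, f (j + 1) = ∑ j ∈ Icc 1 N, f j := by
  rw [Fin.sum_univ_eq_sum_range (fun j => f (j + 1)), range_eq_Ico, sum_Ico_add' f, zero_add,
    Ico_add_one_right_eq_Icc]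

lemma prod_mul_exp_mul_ite {x : ℕ → ℕ} {M N : ℕ} (hN : 1 ≤ N)
    (hxmono : ∀ j k, 1 ≤ j → j < k → k ≤ N → x j < x k) (hxN : x N = M)
    (σ : Equiv.Perm (Fin N)) (u : ℕ → ℂ) (c d vM e : ℂ) :
    ∏ j : Fin N, c * exp (d * (vM - u (σ j + 1))) * (if x (j + 1) = M then exp (d * e) else 1) =
      c ^ N * exp (d * (N * vM - ∑ j ∈ Icc 1 N, u j + e)) := by
  obtain ⟨n, rfl⟩ : ∃ n, N = n + 1 := ⟨N - 1, by omega⟩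
  have hlast : ∏ j : Fin (n + 1), (if x (j + 1) = M then exp (d * e) else 1) = exp (d * e) := by
    rw [prod_eq_single (Fin.last n) (fun j _ hj => if_neg ?_) (by simp)]
    · simp [hxN]
    · have := apply_lt_of_lt_of_apply_eq hxmono hxN (j := j + 1) (by omega)
        (by have := Fin.val_lt_last hj; omega)
      omega
  have hsum : ∑ j : Fin (n + 1), u (σ j + 1) = ∑ j ∈ Icc 1 (n + 1), u j := by
    rw [Equiv.sum_comp σ (fun j => u (j + 1)), Fin.sum_univ_add_one_eq_sum_Icc]
  rw [prod_mul_distrib, prod_mul_distrib, prod_const, card_univ, Fintype.card_fin, hlast,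
    ← exp_sum, mul_assoc, ← exp_add, ← mul_sum, ← mul_add, sum_sub_distrib, sum_const, hsum,
    card_univ, Fintype.card_fin, nsmul_eq_mul]

/-- The factors of the `σ`-summand of `ellE` that belong to the particle at position `y = x_j`
with spectral parameter `w = u_{σ(j)}`; they are the only ones involving `v`. -/
def ellRowFactor (q : ℝ) (lam : ℂ) (M N : ℕ) (v : ℕ → ℂ) (a12 : ℂ) (y : ℕ) (w : ℂ) : ℂ :=
  (∏ k ∈ Icc (y + 1) M, brak q lam (w - v k) / brak q lam 1) *
    (brak q lam (-w + v y + a12 + (y : ℂ) + (N : ℂ) - 2) /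
        brak q lam (a12 + (y : ℂ) + (N : ℂ) - 2) *
      ∏ k ∈ Icc 1 (y - 1), brak q lam (1 + w - v k) / brak q lam 1)

lemma ellRowFactor_update {q : ℝ} {lam s c d : ℂ}
    (hshift : ∀ w, brak q lam (w + s) = c * exp (d * w) * brak q lam w)
    {M N y : ℕ} (hy : y ≤ M) (v : ℕ → ℂ) (a12 w : ℂ) :
    ellRowFactor q lam M N (Function.update v M (v M + s)) a12 y w =
      c * exp (d * (v M - w)) * (if y = M then exp (d * (a12 + N + M - 2)) else 1) *
        ellRowFactor q lam M N v a12 y w := by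
  have hlow : ∏ k ∈ Icc 1 (y - 1), brak q lam (1 + w - Function.update v M (v M + s) k) /
      brak q lam 1 = ∏ k ∈ Icc 1 (y - 1), brak q lam (1 + w - v k) / brak q lam 1 :=
    prod_congr rfl fun k hk => by
      rw [Function.update_of_ne (by have := mem_Icc.mp hk; omega)]
  rcases hy.lt_or_eq with hlt | rfl
  · have hM : M ∈ Icc (y + 1) M := mem_Icc.mpr ⟨hlt, le_rfl⟩
    rw [ellRowFactor, ellRowFactor, hlow, Function.update_of_ne hlt.ne, if_neg hlt.ne,
      ← mul_prod_erase _ _ hM, ← mul_prod_erase _ _ hM, Function.update_self,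
      prod_congr rfl fun k hk => by rw [Function.update_of_ne (ne_of_mem_erase hk)],
      show w - (v M + s) = (w - v M) - s by ring, brak_sub_of_brak_add hshift,
      show -(d * (w - v M)) = d * (v M - w) by ring]
    ring
  · rw [ellRowFactor, ellRowFactor, hlow, Function.update_self, if_pos rfl,
      Icc_eq_empty (by omega),
      show -w + (v y + s) + a12 + y + N - 2 = (-w + v y + a12 + y + N - 2) + s by ring, hshift,
      show d * (-w + v y + a12 + y + N - 2) = d * (v y - w) + d * (a12 + N + y - 2) by ring,
      exp_add]
    ring

lemma ellE_eq_mul_of_prod_ellRowFactor {q : ℝ} {lam : ℂ} {M N : ℕ} {u v v' : ℕ → ℂ}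
    {x : ℕ → ℕ} {a12 m : ℂ}
    (h : ∀ σ : Equiv.Perm (Fin N),
      ∏ j : Fin N, ellRowFactor q lam M N v' a12 (x (j + 1)) (u (σ j + 1)) =
        m * ∏ j : Fin N, ellRowFactor q lam M N v a12 (x (j + 1)) (u (σ j + 1))) :
    ellE q lam M N u v' x a12 = m * ellE q lam M N u v x a12 := by
  rw [ellE, ellE, mul_left_comm m, mul_sum univ _ m]
  congr 1
  refine sum_congr rfl fun σ _ => ?_
  have hσ := h σ
  simp only [ellRowFactor, prod_mul_distrib] at hσ
  simp only [mul_assoc, hσ]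
  ring

lemma ellG_update {q : ℝ} {lam s c d : ℂ}
    (hshift : ∀ w, brak q lam (w + s) = c * exp (d * w) * brak q lam w)
    {M N : ℕ} (hN : 1 ≤ N) (u v : ℕ → ℂ) {x : ℕ → ℕ}
    (hxmono : ∀ j k, 1 ≤ j → j < k → k ≤ N → x j < x k) (hxN : x N = M) (a12 : ℂ) :
    ellG q lam M N u (Function.update v M (v M + s)) x a12 =
      c ^ N * exp (d * (N * v M - ∑ j ∈ Icc 1 N, u j + a12 + N + M - 2)) *
        ellG q lam M N u v x a12 := by
  have hxle (j : Fin N) : x (j + 1) ≤ M := by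
    by_cases hj : (j : ℕ) + 1 = N
    · rw [hj, hxN]
    · exact (apply_lt_of_lt_of_apply_eq hxmono hxN (by omega) (by omega)).le
  have hE : ellE q lam M N u (Function.update v M (v M + s)) x a12 =
      c ^ N * exp (d * (N * v M - ∑ j ∈ Icc 1 N, u j + (a12 + N + M - 2))) *
        ellE q lam M N u v x a12 :=
    ellE_eq_mul_of_prod_ellRowFactor fun σ => by
      rw [prod_congr rfl fun j _ => ellRowFactor_update hshift (hxle j) v a12 _,
        prod_mul_distrib, prod_mul_exp_mul_ite hN hxmono hxN]
  rw [ellG, ellG, hE, mul_left_comm]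
  congr 1
  ring_nf

theorem statement14_general (q : ℝ) (hq0 : 0 < q) (hq1 : q < 1) (lam : ℂ) (hlam : lam ≠ 0)
    (M N : ℕ) (hN : 1 ≤ N)
    (u v : ℕ → ℂ) (x : ℕ → ℕ)
    (hxmono : ∀ j k, 1 ≤ j → j < k → k ≤ N → x j < x k)
    (hxN : x N = M) (a12 : ℂ)
    (hbr1 : brak q lam 1 ≠ 0) :
    ellG q lam M N u (Function.update v M (v M + 2 * (Kone q : ℂ) / lam)) x a12 =
      (-1 : ℂ) ^ N * ellG q lam M N u v x a12 ∧
    ellG q lam M N u (Function.update v M (v M + 2 * Complex.I * (Ktwo q : ℂ) / lam)) x a12 =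
      (-(q : ℂ)⁻¹) ^ N *
        Complex.exp (-(Complex.I * (Real.pi : ℂ) * lam / (Kone q : ℂ)) *
          ((N : ℂ) * v M - (∑ j ∈ Finset.Icc 1 N, u j) + a12 + (N : ℂ) + (M : ℂ) - 2)) *
        ellG q lam M N u v x a12 := by
  have hK := Kone_ne_zero_of_brak_one_ne_zero hbr1
  constructor
  · rw [ellG_update (c := -1) (d := 0) (fun w => by simp [brak_add_two_mul_Kone_div hK hlam])
      hN u v hxmono hxN a12]
    simp
  · exact ellG_update (brak_add_two_I_mul_Ktwo_div hq0 hq1 hK hlam) hN u v hxmono hxN a12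

/-- if `x_N = M`, the function `G_{M,N}`, regarded as a function of `v_M`,
satisfies the quasi-periodicities
`G_{M,N}(…, v_M + 2K₁/λ, …) = (-1)^N G_{M,N}(…)` and
`G_{M,N}(…, v_M + 2iK₂/λ, …)
  = (-q⁻¹)^N exp(-(iπλ/K₁)(N v_M - Σ u_j + a₁₂ + N + M - 2)) G_{M,N}(…)`. -/
theorem statement14 (q : ℝ) (hq0 : 0 < q) (hq1 : q < 1) (lam : ℂ) (hlam : lam ≠ 0)
    (M N : ℕ) (hN : 1 ≤ N) (hNM : N ≤ M)
    (u v : ℕ → ℂ) (x : ℕ → ℕ)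
    (hx1 : 1 ≤ x 1) (hxmono : ∀ j k, 1 ≤ j → j < k → k ≤ N → x j < x k)
    (hxN : x N = M) (a12 : ℂ)
    (hbr1 : brak q lam 1 ≠ 0)
    (hbrA : ∀ n : ℤ, brak q lam (a12 + (n : ℂ)) ≠ 0)
    (hbrA' : ∀ n : ℤ, brak q lam (-a12 + (n : ℂ)) ≠ 0)
    (hu : ∀ j k, 1 ≤ j → j ≤ N → 1 ≤ k → k ≤ N → j ≠ k → brak q lam (u j - u k) ≠ 0) :
    ellG q lam M N u (Function.update v M (v M + 2 * (Kone q : ℂ) / lam)) x a12 =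
      (-1 : ℂ) ^ N * ellG q lam M N u v x a12 ∧
    ellG q lam M N u (Function.update v M (v M + 2 * Complex.I * (Ktwo q : ℂ) / lam)) x a12 =
      (-(q : ℂ)⁻¹) ^ N *
        Complex.exp (-(Complex.I * (Real.pi : ℂ) * lam / (Kone q : ℂ)) *
          ((N : ℂ) * v M - (∑ j ∈ Finset.Icc 1 N, u j) + a12 + (N : ℂ) + (M : ℂ) - 2)) *
        ellG q lam M N u v x a12 :=
  statement14_general q hq0 hq1 lam hlam M N hN u v x hxmono hxN a12 hbr1

end
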